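/- Let G be a connected finite simple graph and π a sign function on G such that the signed graph G_π is not balanced. Then there exists a proper spanning subgraph H of G (same vertex set, edge set a proper subset of E) such that λ₁(G_π) < ρ(H), where λ₁(G_π) is the largest eigenvalue of A(G_π) and ρ(H) is the spectral radius of the adjacency matrix of H. -/

import Mathlib

open Matrix Finset
open scoped Classical

noncomputable section

/-- `μ` is an eigenvalue of the real matrix `A`. -/
def IsEigenval {n : Type*} [Fintype n] (A : Matrix n n ℝ) (μ : ℝ) : Prop :=
  ∃ x : n → ℝ, x ≠ 0 ∧ A.mulVec x = μ • x

/-- The spectral radius of a real symmetric matrix: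
the largest modulus of an eigenvalue. -/
def specRad {n : Type*} [Fintype n] (A : Matrix n n ℝ) : ℝ :=
  sSup {r : ℝ | ∃ μ : ℝ, IsEigenval A μ ∧ r = |μ|}

/-- The spectral radius of a finite simple graph. -/
def grho {V : Type*} [Fintype V] [DecidableEq V] (G : SimpleGraph V) : ℝ :=
  letI := Classical.decRel G.Adj
  specRad (G.adjMatrix ℝ)

/-- max over edges of spectral radius of the edge-deleted graph -/
def rhoE {V : Type*} [Fintype V] [DecidableEq V] (G : SimpleGraph V) : ℝ :=
  sSup {r : ℝ | ∃ e ∈ G.edgeSet, r = grho (G.deleteEdges {e})}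

/-- Eigenpair of the k-power hypergraph G^(k). -/
def IsPowerEigenpair {V : Type*} [Fintype V] [DecidableEq V] (G : SimpleGraph V) (k : ℕ)
    (lam : ℂ) (x : (V ⊕ (G.edgeSet × Fin (k - 2))) → ℂ) : Prop :=
  x ≠ 0 ∧
    (∀ i : V, lam * x (Sum.inl i) ^ (k - 1) =
      ∑ j : V, if h : G.Adj i j then
        x (Sum.inl j) * ∏ t : Fin (k - 2), x (Sum.inr (⟨s(i, j), (G.mem_edgeSet).mpr h⟩, t))
      else 0) ∧
    ∀ (i j : V) (h : G.Adj i j) (t : Fin (k - 2)),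
      lam * x (Sum.inr (⟨s(i, j), (G.mem_edgeSet).mpr h⟩, t)) ^ (k - 1) =
        x (Sum.inl i) * x (Sum.inl j) *
          ∏ u ∈ Finset.univ.erase t, x (Sum.inr (⟨s(i, j), (G.mem_edgeSet).mpr h⟩, u))

/-- λ is an eigenvalue of G^(k). -/
def IsPowerEigenvalue {V : Type*} [Fintype V] [DecidableEq V] (G : SimpleGraph V) (k : ℕ)
    (lam : ℂ) : Prop :=
  ∃ x, IsPowerEigenpair G k lam x

/-- The adjacency matrix of a signed graph, sign function `π : G.edgeSet → ℤˣ`. -/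
def signedAdj {V : Type*} [Fintype V] [DecidableEq V] (G : SimpleGraph V)
    (π : G.edgeSet → ℤˣ) : Matrix V V ℝ :=
  Matrix.of fun i j => if h : G.Adj i j then ((π ⟨s(i, j), (G.mem_edgeSet).mpr h⟩ : ℤ) : ℝ) else 0

/-- Switching-equivalence of matrices. -/
def SwitchEquiv {V : Type*} [Fintype V] [DecidableEq V] (A B : Matrix V V ℝ) : Prop :=
  ∃ d : V → ℝ, (∀ i, d i = 1 ∨ d i = -1) ∧ B = Matrix.diagonal d * A * Matrix.diagonal d

/-- A signed graph is balanced if it is switching equivalent to the all-`+1` signing. -/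
def IsBalanced {V : Type*} [Fintype V] [DecidableEq V] (G : SimpleGraph V)
    (π : G.edgeSet → ℤˣ) : Prop :=
  SwitchEquiv (signedAdj G π) (signedAdj G fun _ => 1)

def IsBipartite {V : Type*} (G : SimpleGraph V) : Prop :=
  ∃ c : V → Bool, ∀ ⦃i j⦄, G.Adj i j → c i ≠ c j

end

/-- largest eigenvalue of a real symmetric matrix -/
noncomputable def lambdaOne {n : Type*} [Fintype n] (A : Matrix n n ℝ) : ℝ :=
  sSup {μ : ℝ | IsEigenval A μ}

/-!
Let `x` be an eigenvector for `λ₁(G_π)`. If `x_i π_ij x_j > 0` on every edge, switching by the signs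
of `x` shows that `G_π` is balanced; hence some edge `uv` has `x_u π_uv x_v ≤ 0`. Let `H = G - uv`.
Termwise `x_i π_ij x_j ≤ |x_i| A(H)_ij |x_j|`, so comparing Rayleigh quotients gives
`λ₁(G_π) ≤ λ₁(H) ≤ ρ(H)`. In case of equality `|x|` is an eigenvector of `A(H)` and `x_u x_v = 0`;
then the zero set of `x` is closed under adjacency in `H` (nonnegativity) and across `uv` (the
`u`-row of `A(G_π) x = λ₁ x`), so by connectivity `x = 0`.
-/

namespace Matrix

variable {n : Type*} [Fintype n]

lemma dotProduct_mulVec_eq_sum (A : Matrix n n ℝ) (x y : n → ℝ) :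
    x ⬝ᵥ A *ᵥ y = ∑ i, ∑ j, x i * A i j * y j := by
  simp [dotProduct, mulVec, Finset.mul_sum, mul_assoc]

lemma dotProduct_mulVec_le_of_forall_le {A B : Matrix n n ℝ} {x y : n → ℝ}
    (h : ∀ i j, x i * A i j * x j ≤ y i * B i j * y j) :
    x ⬝ᵥ A *ᵥ x ≤ y ⬝ᵥ B *ᵥ y := by
  simp only [dotProduct_mulVec_eq_sum]
  exact Finset.sum_le_sum fun i _ => Finset.sum_le_sum fun j _ => h i j

lemma forall_eq_of_dotProduct_mulVec_le {A B : Matrix n n ℝ} {x y : n → ℝ}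
    (h : ∀ i j, x i * A i j * x j ≤ y i * B i j * y j)
    (hle : y ⬝ᵥ B *ᵥ y ≤ x ⬝ᵥ A *ᵥ x) (i j : n) :
    x i * A i j * x j = y i * B i j * y j := by
  simp only [dotProduct_mulVec_eq_sum, ← Finset.sum_product'] at hle
  exact (Finset.sum_eq_sum_iff_of_le fun p _ => h p.1 p.2).1
    (le_antisymm (Finset.sum_le_sum fun p _ => h p.1 p.2) hle) (i, j) (Finset.mem_univ _)

variable [DecidableEq n]

lemma isEigenval_iff_mem_spectrum {A : Matrix n n ℝ} {μ : ℝ} :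
    IsEigenval A μ ↔ μ ∈ spectrum ℝ A := by
  rw [← spectrum_toLin', ← Module.End.hasEigenvalue_iff_mem_spectrum]
  constructor
  · rintro ⟨x, hx0, hx⟩
    exact Module.End.hasEigenvalue_of_hasEigenvector
      ⟨Module.End.mem_eigenspace_iff.2 (by simpa using hx), hx0⟩
  · intro h
    obtain ⟨x, hx, hx0⟩ := h.exists_hasEigenvector
    exact ⟨x, hx0, by simpa using Module.End.mem_eigenspace_iff.1 hx⟩

lemma lambdaOne_eq_sSup_spectrum (A : Matrix n n ℝ) : lambdaOne A = sSup (spectrum ℝ A) := by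
  simp only [lambdaOne, isEigenval_iff_mem_spectrum, Set.ofPred_mem_eq]

lemma IsEigenval.le_specRad {A : Matrix n n ℝ} {μ : ℝ} (h : IsEigenval A μ) :
    μ ≤ specRad A := by
  have hfin : {r : ℝ | ∃ μ, IsEigenval A μ ∧ r = |μ|}.Finite := by
    convert (A.finite_spectrum.image abs) using 1
    ext r
    simp [isEigenval_iff_mem_spectrum, eq_comm]
  exact (le_abs_self μ).trans (le_csSup hfin.bddAbove ⟨μ, h, rfl⟩)

lemma IsHermitian.isEigenval_lambdaOne [Nonempty n] {A : Matrix n n ℝ} (hA : A.IsHermitian) :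
    IsEigenval A (lambdaOne A) := by
  have hne : (spectrum ℝ A).Nonempty := by
    rw [hA.spectrum_real_eq_range_eigenvalues]
    exact Set.range_nonempty _
  rw [lambdaOne_eq_sSup_spectrum, isEigenval_iff_mem_spectrum]
  exact hne.csSup_mem A.finite_spectrum

open scoped MatrixOrder in
lemma IsHermitian.posSemidef_lambdaOne_smul_one_sub {A : Matrix n n ℝ} (hA : A.IsHermitian) :
    (lambdaOne A • (1 : Matrix n n ℝ) - A).PosSemidef := by
  have hle := (le_algebraMap_iff_spectrum_le (r := lambdaOne A) hA.isSelfAdjoint).2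
    fun μ hμ => lambdaOne_eq_sSup_spectrum A ▸ le_csSup A.finite_spectrum.bddAbove hμ
  rwa [Matrix.le_iff, Algebra.algebraMap_eq_smul_one] at hle

lemma PosSemidef.dotProduct_mulVec_le {A : Matrix n n ℝ} {m : ℝ}
    (h : (m • (1 : Matrix n n ℝ) - A).PosSemidef) (y : n → ℝ) :
    y ⬝ᵥ A *ᵥ y ≤ m * (y ⬝ᵥ y) := by
  have := h.dotProduct_mulVec_nonneg y
  simp only [star_trivial, sub_mulVec, smul_mulVec, one_mulVec, dotProduct_sub,
    dotProduct_smul, smul_eq_mul] at this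
  linarith

lemma PosSemidef.mulVec_eq_smul_of_le {A : Matrix n n ℝ} {m : ℝ}
    (h : (m • (1 : Matrix n n ℝ) - A).PosSemidef) {y : n → ℝ}
    (hy : m * (y ⬝ᵥ y) ≤ y ⬝ᵥ A *ᵥ y) : A *ᵥ y = m • y := by
  have hzero : star y ⬝ᵥ (m • (1 : Matrix n n ℝ) - A) *ᵥ y = 0 := by
    have := h.dotProduct_mulVec_nonneg y
    simp only [star_trivial, sub_mulVec, smul_mulVec, one_mulVec, dotProduct_sub,
      dotProduct_smul, smul_eq_mul] at this ⊢
    linarith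
  have := (h.dotProduct_mulVec_zero_iff y).1 hzero
  rw [sub_mulVec, smul_mulVec, one_mulVec, sub_eq_zero] at this
  exact this.symm

end Matrix

namespace SimpleGraph

variable {V : Type*}

lemma Preconnected.forall_of_forall_adj {G : SimpleGraph V} (hG : G.Preconnected)
    {p : V → Prop} (hp : ∀ i j, G.Adj i j → p i → p j) {u : V} (hu : p u) (v : V) : p v := by
  obtain ⟨w⟩ := hG u v
  induction w with
  | nil => exact hu
  | cons h _ ih => exact ih (hp _ _ h hu)

lemma eq_of_adj_of_not_adj_deleteEdges_singleton {G : SimpleGraph V} {e : Sym2 V} {i j : V}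
    (h : G.Adj i j) (h' : ¬ (G.deleteEdges {e}).Adj i j) : s(i, j) = e := by
  simpa [h] using h'

variable [Fintype V] {H : SimpleGraph V} [DecidableRel H.Adj]

lemma eq_zero_of_adj_of_adjMatrix_mulVec_eq_smul {c : ℝ} {y : V → ℝ} (hy : 0 ≤ y)
    (hHy : H.adjMatrix ℝ *ᵥ y = c • y) {i j : V} (hij : H.Adj i j) (hi : y i = 0) : y j = 0 := by
  have hsum : ∑ k ∈ H.neighborFinset i, y k = 0 := by
    simpa [hi] using congrFun hHy i
  exact (Finset.sum_eq_zero_iff_of_nonneg fun k _ => hy k).1 hsum j (by simpa using hij)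

end SimpleGraph

section SignedGraph

variable {V : Type*} [Fintype V] [DecidableEq V] {G : SimpleGraph V} {π : G.edgeSet → ℤˣ}

lemma signedAdj_of_not_adj {i j : V} (h : ¬ G.Adj i j) : signedAdj G π i j = 0 := by
  simp [signedAdj, h]

lemma abs_signedAdj {i j : V} (h : G.Adj i j) : |signedAdj G π i j| = 1 := by
  rcases Int.units_eq_one_or (π ⟨s(i, j), G.mem_edgeSet.2 h⟩) with hs | hs <;>
    simp [signedAdj, h, hs]

lemma signedAdj_ne_zero {i j : V} (h : G.Adj i j) : signedAdj G π i j ≠ 0 :=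
  abs_ne_zero.1 (by rw [abs_signedAdj h]; exact one_ne_zero)

lemma signedAdj_comm (i j : V) : signedAdj G π j i = signedAdj G π i j := by
  by_cases h : G.Adj i j
  · simp only [signedAdj, of_apply, h, h.symm, dif_pos, Sym2.eq_swap]
  · rw [signedAdj_of_not_adj h, signedAdj_of_not_adj (mt G.adj_symm h)]

lemma isHermitian_signedAdj : (signedAdj G π).IsHermitian :=
  Matrix.IsHermitian.ext fun i j => by simp [signedAdj_comm]

lemma isBalanced_of_forall_adj_pos (x : V → ℝ)
    (h : ∀ i j, G.Adj i j → 0 < x i * signedAdj G π i j * x j) : IsBalanced G π := by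
  set d : V → ℝ := fun i => if x i < 0 then -1 else 1
  have hd : ∀ i, d i * x i = |x i| := fun i => by
    by_cases hi : x i < 0
    · simp [d, hi, abs_of_neg]
    · simp [d, hi, abs_of_nonneg (not_lt.1 hi)]
  refine ⟨d, fun i => by by_cases hi : x i < 0 <;> simp [d, hi], ?_⟩
  ext i j
  rw [mul_diagonal, diagonal_mul]
  by_cases hij : G.Adj i j
  · set σ := signedAdj G π i j
    have hσ : |σ| = 1 := abs_signedAdj hij
    have hpos := h i j hij
    have key : (d i * σ * d j) * (x i * σ * x j) = 1 * (x i * σ * x j) := by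
      calc _ = (d i * x i) * (d j * x j) * |σ| ^ 2 := by rw [sq_abs]; ring
        _ = |x i * σ * x j| := by rw [hd, hd, abs_mul, abs_mul, hσ]; ring
        _ = _ := by rw [abs_of_pos hpos, one_mul]
    rw [mul_right_cancel₀ hpos.ne' key]
    simp [signedAdj, hij]
  · simp [signedAdj_of_not_adj hij]

lemma mul_signedAdj_mul_le_abs_mul_adjMatrix_mul {H : SimpleGraph V} [DecidableRel H.Adj]
    (hHG : H ≤ G) {x : V → ℝ}
    (hdel : ∀ i j, G.Adj i j → ¬ H.Adj i j → x i * signedAdj G π i j * x j ≤ 0) (i j : V) :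
    x i * signedAdj G π i j * x j ≤ |x i| * H.adjMatrix ℝ i j * |x j| := by
  by_cases hH : H.Adj i j
  · calc x i * signedAdj G π i j * x j ≤ |x i * signedAdj G π i j * x j| := le_abs_self _
      _ = |x i| * H.adjMatrix ℝ i j * |x j| := by
        simp [abs_mul, abs_signedAdj (hHG hH), hH]
  · rw [SimpleGraph.adjMatrix_apply, if_neg hH, mul_zero, zero_mul]
    by_cases hG : G.Adj i j
    · exact hdel i j hG hH
    · simp [signedAdj_of_not_adj hG]

lemma eq_zero_of_signedAdj_mulVec_eq_smul {μ : ℝ} {x : V → ℝ}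
    (hAx : signedAdj G π *ᵥ x = μ • x) {i j : V} (hij : G.Adj i j) (hi : x i = 0)
    (hothers : ∀ k, G.Adj i k → k ≠ j → x k = 0) : x j = 0 := by
  have hrow : ∑ k, signedAdj G π i k * x k = signedAdj G π i j * x j := by
    refine Finset.sum_eq_single j (fun k _ hkj => ?_) (by simp)
    by_cases hik : G.Adj i k
    · rw [hothers k hik hkj, mul_zero]
    · rw [signedAdj_of_not_adj hik, zero_mul]
  have hzero : signedAdj G π i j * x j = 0 := by
    rw [← hrow]
    simpa [mulVec, dotProduct, hi] using congrFun hAx i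
  exact (mul_eq_zero.1 hzero).resolve_left (signedAdj_ne_zero hij)

lemma eq_zero_of_mulVec_eq_smul_of_adjMatrix_mulVec_abs_eq_smul (hG : G.Connected)
    {H : SimpleGraph V} [DecidableRel H.Adj] {u v : V}
    (hH : ∀ i j, G.Adj i j → ¬ H.Adj i j → s(i, j) = s(u, v)) {μ c : ℝ} {x : V → ℝ}
    (hAx : signedAdj G π *ᵥ x = μ • x)
    (hBx : H.adjMatrix ℝ *ᵥ (fun i => |x i|) = c • fun i => |x i|)
    (huv : x u * x v = 0) : x = 0 := by
  have hHclosed : ∀ i j, H.Adj i j → x i = 0 → x j = 0 := fun i j hij hi =>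
    abs_eq_zero.1 <| SimpleGraph.eq_zero_of_adj_of_adjMatrix_mulVec_eq_smul
      (fun k => abs_nonneg (x k)) hBx hij (abs_eq_zero.2 hi)
  have hclosed : ∀ i j, G.Adj i j → x i = 0 → x j = 0 := by
    intro i j hij hi
    by_cases hHij : H.Adj i j
    · exact hHclosed i j hHij hi
    refine eq_zero_of_signedAdj_mulVec_eq_smul hAx hij hi fun k hik hkj => hHclosed i k ?_ hi
    by_contra hHik
    have hki : s(i, k) = s(i, j) := (hH i k hik hHik).trans (hH i j hij hHij).symm
    rcases Sym2.eq_iff.1 hki with ⟨-, rfl⟩ | ⟨-, rfl⟩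
    exacts [hkj rfl, hik.ne rfl]
  obtain ⟨w, hw⟩ : ∃ w, x w = 0 := by
    rcases mul_eq_zero.1 huv with h | h
    exacts [⟨u, h⟩, ⟨v, h⟩]
  exact funext (hG.preconnected.forall_of_forall_adj hclosed hw)

lemma lt_grho_deleteEdges (hG : G.Connected) {u v : V} (huv : G.Adj u v) {μ : ℝ}
    {x : V → ℝ} (hx : x ≠ 0) (hAx : signedAdj G π *ᵥ x = μ • x)
    (hfr : x u * signedAdj G π u v * x v ≤ 0) : μ < grho (G.deleteEdges {s(u, v)}) := by
  have : Nonempty V := hG.nonempty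
  set H := G.deleteEdges {s(u, v)}
  let _ : DecidableRel H.Adj := Classical.decRel H.Adj
  set A := signedAdj G π
  set B := H.adjMatrix ℝ
  set y : V → ℝ := fun i => |x i|
  change μ < specRad B
  have hH : ∀ i j, G.Adj i j → ¬ H.Adj i j → s(i, j) = s(u, v) := fun _ _ =>
    SimpleGraph.eq_of_adj_of_not_adj_deleteEdges_singleton
  have hterm : ∀ i j, x i * A i j * x j ≤ y i * B i j * y j := by
    refine mul_signedAdj_mul_le_abs_mul_adjMatrix_mul (G.deleteEdges_le _) fun i j hij hHij => ?_
    obtain ⟨rfl, rfl⟩ | ⟨rfl, rfl⟩ := Sym2.eq_iff.1 (hH i j hij hHij)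
    · exact hfr
    · rw [signedAdj_comm]; linarith
  have hB : B.IsHermitian := isHermitian_iff_isSymm.2 H.isSymm_adjMatrix
  have hpsd := hB.posSemidef_lambdaOne_smul_one_sub
  have hyy : y ⬝ᵥ y = x ⬝ᵥ x := by simp [y, dotProduct, abs_mul_abs_self]
  have hxx : 0 < x ⬝ᵥ x := by simpa using dotProduct_self_star_pos_iff.2 hx
  have hxAx : x ⬝ᵥ A *ᵥ x = μ * (x ⬝ᵥ x) := by rw [hAx, dotProduct_smul, smul_eq_mul]
  have hμy : μ * (y ⬝ᵥ y) ≤ y ⬝ᵥ B *ᵥ y := by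
    rw [hyy, ← hxAx]
    exact dotProduct_mulVec_le_of_forall_le hterm
  have hle : μ ≤ lambdaOne B :=
    le_of_mul_le_mul_right (hμy.trans (hpsd.dotProduct_mulVec_le y)) (hyy ▸ hxx)
  refine (hle.lt_of_ne fun heq => hx ?_).trans_le hB.isEigenval_lambdaOne.le_specRad
  have hxuv : x u * x v = 0 := by
    have huv0 := forall_eq_of_dotProduct_mulVec_le hterm
      (by rw [hxAx, ← hyy, heq]; exact hpsd.dotProduct_mulVec_le y) u v
    have hBuv : B u v = 0 := by simp [B, H]
    rw [hBuv, mul_zero, zero_mul, mul_right_comm] at huv0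
    exact (mul_eq_zero.1 huv0).resolve_right (signedAdj_ne_zero huv)
  exact eq_zero_of_mulVec_eq_smul_of_adjMatrix_mulVec_abs_eq_smul hG hH hAx
    (hpsd.mulVec_eq_smul_of_le (heq ▸ hμy)) hxuv

end SignedGraph

/-- If `G_π` is an unbalanced signing of a connected graph `G`, then there is
a proper spanning subgraph `H` of `G` with `λ₁(G_π) < ρ(H)`. -/
theorem lambdaOne_lt_rho_properSpanningSubgraph
    {V : Type*} [Fintype V] [DecidableEq V] (G : SimpleGraph V)
    (hG : G.Connected) (π : G.edgeSet → ℤˣ) (hπ : ¬ IsBalanced G π) :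
    ∃ H : SimpleGraph V, H ≤ G ∧ H ≠ G ∧ lambdaOne (signedAdj G π) < grho H := by
  have : Nonempty V := hG.nonempty
  obtain ⟨x, hx, hAx⟩ := (isHermitian_signedAdj (π := π)).isEigenval_lambdaOne
  obtain ⟨u, v, huv, hfr⟩ : ∃ u v, G.Adj u v ∧ x u * signedAdj G π u v * x v ≤ 0 := by
    by_contra! h
    exact hπ (isBalanced_of_forall_adj_pos x h)
  refine ⟨G.deleteEdges {s(u, v)}, G.deleteEdges_le _, ?_, lt_grho_deleteEdges hG huv hx hAx hfr⟩
  rw [Ne, SimpleGraph.deleteEdges_eq_self, Set.disjoint_singleton_right, not_not]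
  exact huv
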